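/- (Mező's dual of Spivey's formula.) For all natural numbers n, m: (n+m)! = Σ_{r=0}^{n} Σ_{j=0}^{m} c(m,j) · m^{(n−r)↑} · C(n,r) · r!, where m^{b↑} = m(m+1)⋯(m+b−1) denotes the rising factorial (with m^{0↑} = 1) and C(n,r) is the ordinary binomial coefficient. -/

import Mathlib

/-!
Split `(n + m)! = m! · (m + 1)^{n↑}`. The Stirling numbers `c(m, j)` are the coefficients of the
rising factorial polynomial `x^{m↑}`, so evaluating it at `x = 1` gives `Σ_j c(m, j) = m!`.
For the other factor, `(x + 1)^{n↑} = Σ_r n^{r↓} · x^{(n-r)↑}` with `n^{r↓} = C(n, r) · r!`: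
both sides satisfy `G (n + 1) = x^{(n+1)↑} + (n + 1) · G n`, the left one because
`(x + 1)^{(n+1)↑} - x^{(n+1)↑} = ((x + n + 1) - x) · (x + 1)^{n↑}`.
-/

/-- The unsigned Stirling numbers of the first kind `c(n,k)`. -/
def stirling1 : ℕ → ℕ → ℕ
  | 0, 0 => 1
  | 0, _ + 1 => 0
  | _ + 1, 0 => 0
  | n + 1, k + 1 =>
    if k + 1 ≤ n + 1 then stirling1 n k + n * stirling1 n (k + 1) else 0

open Finset Nat Polynomial

theorem stirling1_eq_stirlingFirst : ∀ n k, stirling1 n k = stirlingFirst n k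
  | 0, 0 | 0, _ + 1 | _ + 1, 0 => rfl
  | n + 1, k + 1 => by
    rw [stirling1, stirlingFirst_succ_succ, stirling1_eq_stirlingFirst n k,
      stirling1_eq_stirlingFirst n (k + 1)]
    split_ifs with hk
    · ring
    · rw [stirlingFirst_eq_zero_of_lt (by omega), stirlingFirst_eq_zero_of_lt (by omega),
        mul_zero]

theorem Nat.coeff_ascPochhammer_eq_stirlingFirst (n k : ℕ) :
    (ascPochhammer ℕ n).coeff k = stirlingFirst n k := by
  induction n generalizing k with
  | zero => cases k <;> simp [coeff_one]
  | succ n ih =>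
    rw [ascPochhammer_succ_right, mul_add, ← C_eq_natCast, coeff_add, coeff_mul_C]
    cases k with
    | zero => cases n <;> simp [ih]
    | succ k => rw [coeff_mul_X, ih, ih, stirlingFirst_succ_succ, Nat.cast_id]; ring

theorem Nat.sum_range_stirlingFirst (n : ℕ) : ∑ k ∈ range (n + 1), stirlingFirst n k = n ! := by
  have h := (ascPochhammer ℕ n).eval_eq_sum_range (1 : ℕ)
  simpa [ascPochhammer_natDegree, coeff_ascPochhammer_eq_stirlingFirst] using h.symm

theorem Nat.succ_ascFactorial_succ (x n : ℕ) :
    (x + 1).ascFactorial (n + 1) = x.ascFactorial (n + 1) + (n + 1) * (x + 1).ascFactorial n := by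
  have h_first : x.ascFactorial (n + 1) = x * (x + 1).ascFactorial n := by
    simp only [ascFactorial_eq_prod_range, prod_range_succ' _ n]
    rw [mul_comm]
    simp [add_assoc, add_comm 1]
  rw [h_first, ascFactorial_succ]
  ring

theorem Nat.succ_ascFactorial_eq_sum (x n : ℕ) :
    (x + 1).ascFactorial n = ∑ r ∈ range (n + 1), n.descFactorial r * x.ascFactorial (n - r) := by
  induction n with
  | zero => simp
  | succ n ih =>
    rw [succ_ascFactorial_succ, ih, sum_range_succ' _ (n + 1), mul_sum, add_comm]
    simp only [succ_descFactorial_succ, Nat.add_sub_add_right, mul_assoc, descFactorial_zero,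
      one_mul, Nat.sub_zero]

/-- Mező's dual of Spivey's formula: `(n+m)! = Σ_r Σ_j c(m,j)·m^{(n-r)↑}·C(n,r)·r!`,
where `m^{b↑} = m(m+1)⋯(m+b-1)` is the rising factorial. -/
theorem mezo_dual_spivey (n m : ℕ) :
    (n + m).factorial
    = ∑ r ∈ Finset.range (n + 1), ∑ j ∈ Finset.range (m + 1),
        stirling1 m j * (∏ i ∈ Finset.range (n - r), (m + i)) * n.choose r * r.factorial := by
  calc (n + m)! = m ! * (m + 1).ascFactorial n := by rw [factorial_mul_ascFactorial, add_comm]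
    _ = (∑ j ∈ range (m + 1), stirling1 m j) *
          ∑ r ∈ range (n + 1), n.descFactorial r * m.ascFactorial (n - r) := by
      simp only [stirling1_eq_stirlingFirst, sum_range_stirlingFirst, succ_ascFactorial_eq_sum]
    _ = _ := by
      rw [sum_mul_sum, sum_comm]
      refine sum_congr rfl fun r _ => sum_congr rfl fun j _ => ?_
      rw [descFactorial_eq_factorial_mul_choose, ascFactorial_eq_prod_range]
      ring
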